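/- arXiv:2106.15540 — 3 statements merged into one kernel-verified Lean document; each statement's English description precedes it below -/
import Mathlib

section
/- Let f : X → Y be an injective continuous map such that preimages of quasi-compact open subsets are quasi-compact. If every point of Y is weakly visible, then every point of X is weakly visible; that is, if Y is weakly noetherian then so is X. -/
/-- A subset is Thomason if it is a union of closed sets each of which has
quasi-compact (open) complement. -/
def IsThomason {X : Type*} [TopologicalSpace X] (Y : Set X) : Prop :=
  ∃ S : Set (Set X), (∀ Z ∈ S, IsClosed Z ∧ IsCompact Zᶜ) ∧ Y = ⋃₀ S

/-- A point is weakly visible if its singleton is the intersection of a Thomason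
subset and the complement of a Thomason subset. -/
def WeaklyVisible {X : Type*} [TopologicalSpace X] (x : X) : Prop :=
  ∃ Y₁ Y₂ : Set X, IsThomason Y₁ ∧ IsThomason Y₂ ∧ ({x} : Set X) = Y₁ ∩ Y₂ᶜ

lemma isThomason_preimage {X Y : Type*} [TopologicalSpace X] [TopologicalSpace Y]
    (f : X → Y) (hf : Continuous f)
    (hspec : ∀ U : Set Y, IsOpen U → IsCompact U → IsCompact (f ⁻¹' U))
    {T : Set Y} (hT : IsThomason T) : IsThomason (f ⁻¹' T) := by
  obtain ⟨S, hS, rfl⟩ := hT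
  refine ⟨(f ⁻¹' ·) '' S, ?_, ?_⟩
  · rintro _ ⟨Z, hZ, rfl⟩
    obtain ⟨h1, h2⟩ := hS Z hZ
    exact ⟨h1.preimage hf, by rw [← Set.preimage_compl]; exact hspec _ h1.isOpen_compl h2⟩
  · ext x
    simp [Set.mem_sUnion]

theorem weakly_noetherian_of_injective_spectral
    {X Y : Type*} [TopologicalSpace X] [TopologicalSpace Y] (f : X → Y)
    (hinj : Function.Injective f) (hf : Continuous f)
    (hspec : ∀ U : Set Y, IsOpen U → IsCompact U → IsCompact (f ⁻¹' U))
    (hY : ∀ y : Y, WeaklyVisible y) :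
    ∀ x : X, WeaklyVisible x := by
  intro x
  obtain ⟨Y₁, Y₂, h1, h2, hxy⟩ := hY (f x)
  refine ⟨f ⁻¹' Y₁, f ⁻¹' Y₂, isThomason_preimage f hf hspec h1,
    isThomason_preimage f hf hspec h2, ?_⟩
  have : f ⁻¹' {f x} = {x} := by
    ext z; simp [hinj.eq_iff]
  rw [← this, hxy]
  simp [Set.preimage_inter, Set.preimage_compl]
end

section
/- In the prime spectrum of a commutative ring, an arbitrary intersection of quasi-compact open subsets is quasi-compact. Equivalently, the complement of any Thomason subset of Spec(R) is quasi-compact. -/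
open PrimeSpectrum Set Topology

section Aux

variable {R : Type*} [CommRing R]

open Classical in
/-- The map sending a prime to its indicator function. -/
noncomputable def specToPi (p : PrimeSpectrum R) : R → Bool := fun r => decide (r ∈ p.asIdeal)

lemma specToPi_eq_true {p : PrimeSpectrum R} {r : R} :
    specToPi p r = true ↔ r ∈ p.asIdeal := by simp [specToPi]

lemma specToPi_eq_false {p : PrimeSpectrum R} {r : R} :
    specToPi p r = false ↔ r ∉ p.asIdeal := by simp [specToPi]

/-- The set of indicator functions of prime ideals. -/
def primeIndicatorSet (R : Type*) [CommRing R] : Set (R → Bool) :=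
  {f | f 0 = true ∧ f 1 = false ∧
    (∀ a b, f a = true → f b = true → f (a + b) = true) ∧
    (∀ a b, f b = true → f (a * b) = true) ∧
    (∀ a b, f (a * b) = true → f a = true ∨ f b = true)}

lemma isClopen_coord (r : R) (b : Bool) : IsClopen {f : R → Bool | f r = b} := by
  have : {f : R → Bool | f r = b} = (fun f : R → Bool => f r) ⁻¹' {b} := rfl
  rw [this]
  exact ⟨(isClosed_discrete _).preimage (continuous_apply r),
    (isOpen_discrete _).preimage (continuous_apply r)⟩

lemma isClosed_primeIndicatorSet : IsClosed (primeIndicatorSet R) := by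
  have h1 : ∀ (r : R) (b : Bool), IsClosed {f : R → Bool | f r = b} :=
    fun r b => (isClopen_coord r b).1
  have h2 : ∀ (r : R) (b : Bool), IsOpen {f : R → Bool | f r = b} :=
    fun r b => (isClopen_coord r b).2
  have : primeIndicatorSet R =
      {f : R → Bool | f 0 = true} ∩ {f | f 1 = false} ∩
      (⋂ (a : R) (b : R), {f | f a = true}ᶜ ∪ ({f | f b = true}ᶜ ∪ {f | f (a + b) = true})) ∩
      (⋂ (a : R) (b : R), {f | f b = true}ᶜ ∪ {f | f (a * b) = true}) ∩
      (⋂ (a : R) (b : R), {f | f (a * b) = true}ᶜ ∪ ({f | f a = true} ∪ {f | f b = true})) := by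
    ext f
    simp only [primeIndicatorSet, mem_inter_iff, mem_iInter, mem_union, mem_compl_iff,
      mem_setOf_eq]
    constructor
    · rintro ⟨h0, hOne, hadd, hsmul, hmul⟩
      refine ⟨⟨⟨⟨h0, hOne⟩, fun a b => ?_⟩, fun a b => ?_⟩, fun a b => ?_⟩ <;>
        [have := hadd a b; have := hsmul a b; have := hmul a b] <;> tauto
    · rintro ⟨⟨⟨⟨h0, hOne⟩, hadd⟩, hsmul⟩, hmul⟩
      refine ⟨h0, hOne, fun a b => ?_, fun a b => ?_, fun a b => ?_⟩ <;>
        [have := hadd a b; have := hsmul a b; have := hmul a b] <;> tauto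
  rw [this]
  refine ((((h1 0 true).inter (h1 1 false)).inter ?_).inter ?_).inter ?_ <;>
    refine isClosed_iInter fun a => isClosed_iInter fun b => ?_
  · exact ((h2 a true).isClosed_compl).union
      (((h2 b true).isClosed_compl).union (h1 _ true))
  · exact ((h2 b true).isClosed_compl).union (h1 _ true)
  · exact ((h2 _ true).isClosed_compl).union ((h1 a true).union (h1 b true))

lemma range_specToPi : Set.range (specToPi (R := R)) = primeIndicatorSet R := by
  ext f
  constructor
  · rintro ⟨p, rfl⟩
    refine ⟨specToPi_eq_true.2 p.asIdeal.zero_mem,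
      specToPi_eq_false.2 (p.isPrime.ne_top ∘ p.asIdeal.eq_top_iff_one.2),
      fun a b ha hb => specToPi_eq_true.2
        (p.asIdeal.add_mem (specToPi_eq_true.1 ha) (specToPi_eq_true.1 hb)),
      fun a b hb => specToPi_eq_true.2 (p.asIdeal.mul_mem_left a (specToPi_eq_true.1 hb)),
      fun a b hab => ?_⟩
    rcases p.isPrime.mem_or_mem (specToPi_eq_true.1 hab) with h | h
    · exact Or.inl (specToPi_eq_true.2 h)
    · exact Or.inr (specToPi_eq_true.2 h)
  · rintro ⟨h0, hOne, hadd, hsmul, hmul⟩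
    set I : Ideal R :=
      { carrier := {r | f r = true}
        zero_mem' := h0
        add_mem' := fun ha hb => hadd _ _ ha hb
        smul_mem' := fun c x hx => by simpa [smul_eq_mul] using hsmul c x hx }
    have hprime : I.IsPrime := by
      constructor
      · intro h
        have : f 1 = true := I.eq_top_iff_one.1 h
        simp [hOne] at this
      · exact fun {a b} h => hmul a b h
    refine ⟨⟨I, hprime⟩, funext fun r => ?_⟩
    have : r ∈ I ↔ f r = true := Iff.rfl
    cases hb : f r
    · exact specToPi_eq_false.2 (by simp [this, hb])
    · exact specToPi_eq_true.2 (this.2 hb)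

lemma basicOpen_preimage (g : R) :
    (basicOpen g : Set (PrimeSpectrum R)) = specToPi ⁻¹' {f | f g = false} := by
  ext p
  rw [Set.mem_preimage, Set.mem_setOf_eq, specToPi_eq_false]
  exact PrimeSpectrum.mem_basicOpen _ _

/-- The patch (constructible) topology on the prime spectrum, induced from the
product topology via the indicator-function embedding. -/
noncomputable def patchTop (R : Type*) [CommRing R] : TopologicalSpace (PrimeSpectrum R) :=
  TopologicalSpace.induced specToPi inferInstance

theorem isCompact_sInter_qc_open (S : Set (Set (PrimeSpectrum R)))
    (hS : ∀ U ∈ S, IsOpen U ∧ IsCompact U) : IsCompact (⋂₀ S) := by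
  have hind : @IsInducing _ _ (patchTop R) _ (specToPi (R := R)) :=
    @IsInducing.mk _ _ (patchTop R) _ _ rfl
  have hcont : Continuous[patchTop R, _] (specToPi (R := R)) := continuous_induced_dom
  -- the patch topology is compact
  have hcs : @CompactSpace _ (patchTop R) := by
    refine @CompactSpace.mk _ (patchTop R) ?_
    rw [@Topology.IsInducing.isCompact_iff (PrimeSpectrum R) (R → Bool) (patchTop R) _
      Set.univ specToPi hind, image_univ, range_specToPi]
    exact isClosed_primeIndicatorSet.isCompact
  -- basic opens are clopen in the patch topology
  have hboC : ∀ g : R, IsClosed[patchTop R] (basicOpen g : Set (PrimeSpectrum R)) := fun g => by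
    rw [basicOpen_preimage]
    exact @IsClosed.preimage _ _ (patchTop R) _ _ hcont _ (isClopen_coord g false).1
  have hboO : ∀ g : R, IsOpen[patchTop R] (basicOpen g : Set (PrimeSpectrum R)) := fun g => by
    rw [basicOpen_preimage]
    exact @IsOpen.preimage _ _ (patchTop R) _ _ hcont _ (isClopen_coord g false).2
  -- each member of S is closed in the patch topology
  have hclosed : ∀ U ∈ S, IsClosed[patchTop R] U := by
    intro U hU
    obtain ⟨t, ht⟩ := isCompact_isOpen_iff.mp ⟨(hS U hU).2, (hS U hU).1⟩
    have hUnion : U = ⋃ g ∈ t, (basicOpen g : Set (PrimeSpectrum R)) := by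
      rw [← ht]
      ext p
      simp [mem_zeroLocus, Set.subset_def, mem_basicOpen]
    rw [hUnion]
    exact @Set.Finite.isClosed_biUnion _ _ (patchTop R) _ _ t.finite_toSet
      fun g _ => hboC g
  have hKclosed : IsClosed[patchTop R] (⋂₀ S) := @isClosed_sInter _ (patchTop R) _ hclosed
  have hKcompact : @IsCompact _ (patchTop R) (⋂₀ S) :=
    @IsClosed.isCompact _ (patchTop R) _ hcs hKclosed
  -- the identity map from the patch topology to the Zariski topology is continuous
  have hid : Continuous[patchTop R, PrimeSpectrum.zariskiTopology]
      (id : PrimeSpectrum R → PrimeSpectrum R) := by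
    rw [@continuous_def (PrimeSpectrum R) (PrimeSpectrum R) (patchTop R)
      PrimeSpectrum.zariskiTopology id]
    intro s hs
    rw [Set.preimage_id]
    obtain ⟨B', hB', rfl⟩ := (isTopologicalBasis_basic_opens (R := R)).open_eq_sUnion hs
    refine @isOpen_sUnion _ (patchTop R) _ fun u hu => ?_
    obtain ⟨g, rfl⟩ := hB' hu
    exact hboO g
  have himg := @IsCompact.image _ _ (patchTop R) PrimeSpectrum.zariskiTopology
    (⋂₀ S) id hKcompact hid
  rw [Set.image_id] at himg
  exact himg

end Aux

theorem primeSpectrum_sInter_qc_open_isCompact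
    {R : Type*} [CommRing R] :
    (∀ S : Set (Set (PrimeSpectrum R)),
      (∀ U ∈ S, IsOpen U ∧ IsCompact U) → IsCompact (⋂₀ S)) ∧
    (∀ T : Set (PrimeSpectrum R), IsThomason T → IsCompact Tᶜ) := by
  refine ⟨isCompact_sInter_qc_open, ?_⟩
  rintro T ⟨S, hS, rfl⟩
  rw [Set.compl_sUnion]
  exact isCompact_sInter_qc_open _ (by
    rintro U ⟨Z, hZ, rfl⟩
    exact ⟨(hS Z hZ).1.isOpen_compl, (hS Z hZ).2⟩)
end

section
/- Let R be a commutative ring. If S ⊆ Spec(R) is closed in the constructible topology and stable under generalization (i.e., p ∈ S and q ⊆ p implies q ∈ S), then S is an intersection of quasi-compact open subsets of Spec(R); equivalently, the complement of S is a Thomason subset. -/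
/-- The constructible topology on the prime spectrum: generated by the
quasi-compact Zariski-open sets and their complements. -/
def constructibleTop (R : Type*) [CommRing R] : TopologicalSpace (PrimeSpectrum R) :=
  TopologicalSpace.generateFrom
    ({U | IsOpen U ∧ IsCompact U} ∪ {V | IsOpen Vᶜ ∧ IsCompact Vᶜ})

/-!
A point `x ∉ S` is not a generalization of any `y ∈ S`, so each `y ∈ S` has a quasi-compact
open neighbourhood missing `x`. These neighbourhoods are open in the constructible topology,
in which `S` is compact (Stacks 0901), so finitely many of them cover `S`: their union is a
quasi-compact open set containing `S` but not `x`.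
-/

open Topology

section SpectralSpace

variable {X : Type*} [TopologicalSpace X]

lemma isCompact_constructibleTopology_of_isClosed [CompactSpace X] [QuasiSober X]
    [PrespectralSpace X] [QuasiSeparatedSpace X] {S : Set X}
    (hS : IsClosed[constructibleTopology X] S) : @IsCompact X (constructibleTopology X) S := by
  have huniv : @IsCompact X (constructibleTopology X) Set.univ := by
    simpa [(WithTopology.ofTopology_surjective _).range_eq] using
      @IsCompact.image _ _ _ (constructibleTopology X) _ _ isCompact_univ
        (WithTopology.continuous_ofTopology (constructibleTopology X))
  exact @IsCompact.of_isClosed_subset X (constructibleTopology X) _ _ huniv hS S.subset_univ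

lemma StableUnderGeneralization.exists_isOpen_isCompact_superset_notMem [PrespectralSpace X]
    {S : Set X} (hS : @IsCompact X (constructibleTopology X) S) (hgen : StableUnderGeneralization S)
    {x : X} (hx : x ∉ S) : ∃ U, IsOpen U ∧ IsCompact U ∧ S ⊆ U ∧ x ∉ U := by
  let 𝒱 : Set (Set X) := {V | IsOpen V ∧ IsCompact V ∧ x ∉ V}
  have hcover : S ⊆ ⋃ V ∈ 𝒱, V := by
    intro y hy
    obtain ⟨W, hW, hyW, hxW⟩ :=
      not_specializes_iff_exists_open.mp fun hxy : x ⤳ y => hx (hgen hxy hy)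
    obtain ⟨V, ⟨hVo, hVc⟩, hyV, hVW⟩ :=
      PrespectralSpace.isTopologicalBasis.exists_subset_of_mem_open hyW hW
    exact Set.mem_biUnion (x := V) ⟨hVo, hVc, fun hxV => hxW (hVW hxV)⟩ hyV
  obtain ⟨𝒱₀, h𝒱₀, hfin, hS𝒱₀⟩ := @IsCompact.elim_finite_subcover_image _ _
    (constructibleTopology X) _ _ id hS
    (fun V hV => hV.2.1.isOpen_constructibleTopology_of_isOpen hV.1) hcover
  refine ⟨⋃ V ∈ 𝒱₀, V, isOpen_biUnion fun V hV => (h𝒱₀ hV).1,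
    hfin.isCompact_biUnion fun V hV => (h𝒱₀ hV).2.1, hS𝒱₀, ?_⟩
  simp only [Set.mem_iUnion, not_exists]
  exact fun V hV => (h𝒱₀ hV).2.2

lemma StableUnderGeneralization.eq_sInter_isOpen_isCompact [PrespectralSpace X]
    {S : Set X} (hS : @IsCompact X (constructibleTopology X) S) (hgen : StableUnderGeneralization S) :
    S = ⋂₀ {U | IsOpen U ∧ IsCompact U ∧ S ⊆ U} := by
  refine subset_antisymm (fun y hy U hU => hU.2.2 hy) fun y hy => ?_
  by_contra hyS
  obtain ⟨U, hUo, hUc, hSU, hyU⟩ := hgen.exists_isOpen_isCompact_superset_notMem hS hyS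
  exact hyU (hy U ⟨hUo, hUc, hSU⟩)

lemma isThomason_compl_sInter {F : Set (Set X)} (hF : ∀ U ∈ F, IsOpen U ∧ IsCompact U) :
    IsThomason (⋂₀ F)ᶜ := by
  refine ⟨compl '' F, ?_, Set.compl_sInter F⟩
  rintro Z ⟨U, hU, rfl⟩
  exact ⟨(hF U hU).1.isClosed_compl, by simpa using (hF U hU).2⟩

end SpectralSpace

lemma constructibleTop_eq (R : Type*) [CommRing R] :
    constructibleTop R = constructibleTopology (PrimeSpectrum R) := by
  simp only [constructibleTop, constructibleTopology, constructibleTopologySubbasis,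
    isOpen_compl_iff]

theorem proconstructible_genStable_is_intersection_qc_opens
    {R : Type*} [CommRing R] (S : Set (PrimeSpectrum R))
    (hS : @IsClosed (PrimeSpectrum R) (constructibleTop R) S)
    (hgen : ∀ p ∈ S, ∀ q : PrimeSpectrum R, q.asIdeal ≤ p.asIdeal → q ∈ S) :
    (∃ F : Set (Set (PrimeSpectrum R)),
      (∀ U ∈ F, IsOpen U ∧ IsCompact U) ∧ S = ⋂₀ F) ∧
    IsThomason Sᶜ := by
  rw [constructibleTop_eq] at hS
  have hgen' : StableUnderGeneralization S := fun p q hqp hp =>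
    hgen p hp q ((PrimeSpectrum.le_iff_specializes q p).mpr hqp)
  have hF : ∀ U ∈ {U | IsOpen U ∧ IsCompact U ∧ S ⊆ U}, IsOpen U ∧ IsCompact U :=
    fun U hU => ⟨hU.1, hU.2.1⟩
  have hSF := hgen'.eq_sInter_isOpen_isCompact (isCompact_constructibleTopology_of_isClosed hS)
  exact ⟨⟨_, hF, hSF⟩, hSF ▸ isThomason_compl_sInter hF⟩
end
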